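/- arXiv:2103.09324 — 5 statements merged into one kernel-verified Lean document; each statement's English description precedes it below -/
import Mathlib

section
/- Let P1 = N(m1, σ1²) and P2 = N(m2, σ2²) be normal distributions on ℝ with (m1, σ1) ≠ (m2, σ2). Then either P1 strongly dominates P2 in the right tail, or P2 strongly dominates P1 in the right tail. -/
open Real MeasureTheory Filter Topology ProbabilityTheory

/-- `P1` strongly dominates `P2` in the right tail: the relative proportion of `P1`
in the right tail approaches 100% as the cutoff goes to infinity. -/
def StronglyDominatesRight (P1 P2 : Measure ℝ) : Prop :=
  Tendsto (fun c => (P1 (Set.Ioi c)).toReal /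
    ((P1 (Set.Ioi c)).toReal + (P2 (Set.Ioi c)).toReal)) atTop (𝓝 1)

/-! By L'Hôpital's rule, the ratio of two right tails has the same limit as the ratio of the
densities. The ratio of two Gaussian densities is a constant times `exp` of a quadratic in `x`; for
distinct parameters, that quadratic tends to `-∞` for the ratio taken one way round. -/

open Set intervalIntegral
open scoped NNReal

theorem hasDerivAt_integral_Ioi {f : ℝ → ℝ} {a c : ℝ} (hf : Continuous f)
    (hfi : IntegrableOn f (Ioi a)) (hac : a < c) :
    HasDerivAt (fun t => ∫ x in Ioi t, f x) (-f c) c := by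
  have hsplit : (fun t => (∫ x in Ioi a, f x) - ∫ x in a..t, f x) =ᶠ[𝓝 c]
      fun t => ∫ x in Ioi t, f x := by
    filter_upwards [Ioi_mem_nhds hac] with t ht
    rw [sub_eq_iff_eq_add', integral_interval_add_Ioi hfi (hfi.mono_set (Ioi_subset_Ioi ht.le))]
  have hprimitive : HasDerivAt (fun t => ∫ x in a..t, f x) (f c) c :=
    integral_hasDerivAt_right (hf.intervalIntegrable a c)
      hf.aestronglyMeasurable.stronglyMeasurableAtFilter hf.continuousAt
  exact (hprimitive.const_sub _).congr_of_eventuallyEq hsplit.symm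

theorem tendsto_integral_Ioi_div_integral_Ioi {f g : ℝ → ℝ} {a : ℝ} {l : Filter ℝ}
    (hf : Continuous f) (hfi : IntegrableOn f (Ioi a))
    (hg : Continuous g) (hgi : IntegrableOn g (Ioi a))
    (hg0 : ∀ᶠ x in atTop, g x ≠ 0) (h : Tendsto (fun x => f x / g x) atTop l) :
    Tendsto (fun c => (∫ x in Ioi c, f x) / ∫ x in Ioi c, g x) atTop l := by
  refine HasDerivAt.lhopital_zero_atTop (f' := fun c => -f c) (g' := fun c => -g c)
    ?_ ?_ (hg0.mono fun x hx => neg_ne_zero.mpr hx)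
    (tendsto_integral_Ioi_zero tendsto_id) (tendsto_integral_Ioi_zero tendsto_id)
    (by simpa only [neg_div_neg_eq] using h)
  · filter_upwards [Ioi_mem_atTop a] with c hc using hasDerivAt_integral_Ioi hf hfi hc
  · filter_upwards [Ioi_mem_atTop a] with c hc using hasDerivAt_integral_Ioi hg hgi hc

theorem tendsto_div_add_of_tendsto_div_zero {α : Type*} {l : Filter α} {u v : α → ℝ}
    (hu : ∀ᶠ x in l, u x ≠ 0) (h : Tendsto (fun x => v x / u x) l (𝓝 0)) :
    Tendsto (fun x => u x / (u x + v x)) l (𝓝 1) := by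
  have hlim : Tendsto (fun x => (1 + v x / u x)⁻¹) l (𝓝 (1 + 0)⁻¹) :=
    (tendsto_const_nhds.add h).inv₀ (by norm_num)
  rw [add_zero, inv_one] at hlim
  refine hlim.congr' (hu.mono fun x hx => ?_)
  rw [one_add_div hx, inv_div]

theorem tendsto_quadratic_atTop_atBot {a b d : ℝ} (h : a < 0 ∨ a = 0 ∧ b < 0) :
    Tendsto (fun x => a * x ^ 2 + b * x + d) atTop atBot := by
  refine tendsto_atBot_add_const_right _ d ?_
  rcases h with ha | ⟨rfl, hb⟩
  · have hlin : Tendsto (fun x => a * x + b) atTop atBot :=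
      tendsto_atBot_add_const_right _ b ((tendsto_const_mul_atBot_of_neg ha).mpr tendsto_id)
    refine (tendsto_id.atTop_mul_atBot₀ hlin).congr fun x => ?_
    simp only [id]
    ring
  · simpa using (tendsto_const_mul_atBot_of_neg hb).mpr tendsto_id

namespace ProbabilityTheory

theorem continuous_gaussianPDFReal (μ : ℝ) (v : ℝ≥0) : Continuous (gaussianPDFReal μ v) := by
  rw [gaussianPDFReal_def]
  fun_prop

theorem toReal_gaussianReal_Ioi (μ : ℝ) {v : ℝ≥0} (hv : v ≠ 0) (c : ℝ) :
    (gaussianReal μ v (Ioi c)).toReal = ∫ x in Ioi c, gaussianPDFReal μ v x := by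
  rw [gaussianReal_apply_eq_integral μ hv, ENNReal.toReal_ofReal]
  exact setIntegral_nonneg measurableSet_Ioi fun x _ => gaussianPDFReal_nonneg μ v x

theorem toReal_gaussianReal_Ioi_pos (μ : ℝ) {v : ℝ≥0} (hv : v ≠ 0) (c : ℝ) :
    0 < (gaussianReal μ v (Ioi c)).toReal := by
  refine ENNReal.toReal_pos (fun h0 => ?_) (measure_ne_top _ _)
  simpa using gaussianReal_absolutelyContinuous' μ hv h0

theorem gaussianPDFReal_div_gaussianPDFReal (μ₁ μ₂ : ℝ) (v₁ v₂ : ℝ≥0) (x : ℝ) :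
    gaussianPDFReal μ₂ v₂ x / gaussianPDFReal μ₁ v₁ x =
      √(2 * π * v₁) / √(2 * π * v₂) *
        exp (-(x - μ₂) ^ 2 / (2 * v₂) - -(x - μ₁) ^ 2 / (2 * v₁)) := by
  rw [gaussianPDFReal, gaussianPDFReal, mul_div_mul_comm, inv_div_inv, exp_sub]

/-- The log of the density ratio is a quadratic in `x` whose leading coefficients are
`1 / (2 v₁) - 1 / (2 v₂)` and, for equal variances, `(μ₂ - μ₁) / v`: hence the lexicographic
order on (variance, mean). -/
theorem tendsto_gaussianPDFReal_div_gaussianPDFReal {μ₁ μ₂ : ℝ} {v₁ v₂ : ℝ≥0} (hv₁ : v₁ ≠ 0)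
    (hv₂ : v₂ ≠ 0) (hlt : toLex (v₂, μ₂) < toLex (v₁, μ₁)) :
    Tendsto (fun x => gaussianPDFReal μ₂ v₂ x / gaussianPDFReal μ₁ v₁ x) atTop (𝓝 0) := by
  have hv₁' : (0 : ℝ) < v₁ := by positivity
  have hv₂' : (0 : ℝ) < v₂ := by positivity
  have hcoeff : 1 / (2 * v₁) - 1 / (2 * v₂) < (0 : ℝ) ∨
      1 / (2 * v₁) - 1 / (2 * v₂) = (0 : ℝ) ∧ μ₂ / v₂ - μ₁ / v₁ < 0 := by
    rcases Prod.Lex.toLex_lt_toLex.mp hlt with hv | ⟨rfl, hμ⟩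
    · left
      rw [sub_neg]
      gcongr
    · right
      refine ⟨sub_self _, ?_⟩
      rw [← sub_div]
      exact div_neg_of_neg_of_pos (by linarith) hv₂'
  have hexponent := tendsto_quadratic_atTop_atBot
    (d := μ₁ ^ 2 / (2 * v₁) - μ₂ ^ 2 / (2 * v₂)) hcoeff
  have hexp := (tendsto_exp_atBot.comp hexponent).const_mul (√(2 * π * v₁) / √(2 * π * v₂))
  rw [mul_zero] at hexp
  refine hexp.congr fun x => ?_
  rw [gaussianPDFReal_div_gaussianPDFReal, Function.comp_apply]
  congr 2
  field_simp
  ring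

theorem stronglyDominatesRight_gaussianReal {μ₁ μ₂ : ℝ} {v₁ v₂ : ℝ≥0} (hv₁ : v₁ ≠ 0)
    (hv₂ : v₂ ≠ 0) (hlt : toLex (v₂, μ₂) < toLex (v₁, μ₁)) :
    StronglyDominatesRight (gaussianReal μ₁ v₁) (gaussianReal μ₂ v₂) := by
  refine tendsto_div_add_of_tendsto_div_zero
    (Eventually.of_forall fun c => (toReal_gaussianReal_Ioi_pos μ₁ hv₁ c).ne') ?_
  simp only [toReal_gaussianReal_Ioi _ hv₁, toReal_gaussianReal_Ioi _ hv₂]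
  exact tendsto_integral_Ioi_div_integral_Ioi (a := 0)
    (continuous_gaussianPDFReal μ₂ v₂) (integrable_gaussianPDFReal μ₂ v₂).integrableOn
    (continuous_gaussianPDFReal μ₁ v₁) (integrable_gaussianPDFReal μ₁ v₁).integrableOn
    (Eventually.of_forall fun x => (gaussianPDFReal_pos μ₁ v₁ x hv₁).ne')
    (tendsto_gaussianPDFReal_div_gaussianPDFReal hv₁ hv₂ hlt)

theorem stronglyDominatesRight_gaussianReal_or {μ₁ μ₂ : ℝ} {v₁ v₂ : ℝ≥0} (hv₁ : v₁ ≠ 0)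
    (hv₂ : v₂ ≠ 0) (hne : (μ₁, v₁) ≠ (μ₂, v₂)) :
    StronglyDominatesRight (gaussianReal μ₁ v₁) (gaussianReal μ₂ v₂) ∨
      StronglyDominatesRight (gaussianReal μ₂ v₂) (gaussianReal μ₁ v₁) := by
  rcases lt_trichotomy (toLex (v₂, μ₂)) (toLex (v₁, μ₁)) with hlt | heq | hgt
  · exact .inl (stronglyDominatesRight_gaussianReal hv₁ hv₂ hlt)
  · simp only [EmbeddingLike.apply_eq_iff_eq, Prod.mk.injEq] at heq
    exact absurd (by rw [heq.1, heq.2]) hne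
  · exact .inr (stronglyDominatesRight_gaussianReal hv₂ hv₁ hgt)

end ProbabilityTheory

theorem normal_dichotomy_strong_dominance
    (m1 m2 σ1 σ2 : ℝ) (hσ1 : 0 < σ1) (hσ2 : 0 < σ2)
    (hne : (m1, σ1) ≠ (m2, σ2)) :
    StronglyDominatesRight (gaussianReal m1 (Real.toNNReal (σ1 ^ 2)))
        (gaussianReal m2 (Real.toNNReal (σ2 ^ 2)))
    ∨ StronglyDominatesRight (gaussianReal m2 (Real.toNNReal (σ2 ^ 2)))
        (gaussianReal m1 (Real.toNNReal (σ1 ^ 2))) := by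
  have hv₁ : Real.toNNReal (σ1 ^ 2) ≠ 0 := by positivity
  have hv₂ : Real.toNNReal (σ2 ^ 2) ≠ 0 := by positivity
  refine stronglyDominatesRight_gaussianReal_or hv₁ hv₂ fun heq => hne ?_
  obtain ⟨hm, hv⟩ := Prod.mk.inj heq
  rw [Real.toNNReal_eq_toNNReal_iff (sq_nonneg σ1) (sq_nonneg σ2),
    pow_left_inj₀ hσ1.le hσ2.le two_ne_zero] at hv
  rw [hm, hv]
end

section
/- Let n ≥ 1 and let P1, …, Pn be pairwise different normal distributions on ℝ, with Pi = N(mi, σi²) and (mi, σi) ≠ (mj, σj) for i ≠ j. Then there exists one and only one index i* ∈ {1, …, n} such that P_{i*} strongly dominates P_i in the right tail for every i ≠ i*. -/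
open Real MeasureTheory Filter Topology ProbabilityTheory

/-!
For `c ≥ m` the tail of `N(m, σ²)` beyond `c` lies between `ε · f(c + ε)` (the mass of the slab
`(c, c + ε]`) and the Chernoff bound `exp (-(c - m)² / (2σ²))`. Comparing the two bounds, the
tail ratio of `N(m₂, σ₂²)` to `N(m₁, σ₁²)` is at most a constant times an exponential whose
exponent tends to `-∞` as soon as `(σ₂, m₂) < (σ₁, m₁)` lexicographically. Hence the law with the
lexicographically largest `(σ, m)` dominates all the others, and it is the only one, because
strong dominance is asymmetric.
-/

open scoped NNReal

theorem StronglyDominatesRight.asymm {P Q : Measure ℝ} (h : StronglyDominatesRight P Q) :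
    ¬ StronglyDominatesRight Q P := fun h' => by
  obtain ⟨c, hPQ, hQP⟩ := ((h.eventually (lt_mem_nhds one_half_lt_one)).and
    (h'.eventually (lt_mem_nhds one_half_lt_one))).exists
  rw [add_comm] at hQP
  have := div_self_le_one ((P (Set.Ioi c)).toReal + (Q (Set.Ioi c)).toReal)
  rw [add_div] at this
  linarith

theorem stronglyDominatesRight_of_tendsto_div_zero {P Q : Measure ℝ}
    (hP : ∀ᶠ c in atTop, 0 < (P (Set.Ioi c)).toReal)
    (hQP : Tendsto (fun c => (Q (Set.Ioi c)).toReal / (P (Set.Ioi c)).toReal) atTop (𝓝 0)) :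
    StronglyDominatesRight P Q := by
  have h : Tendsto (fun c => 1 / (1 + (Q (Set.Ioi c)).toReal / (P (Set.Ioi c)).toReal)) atTop
      (𝓝 (1 / (1 + 0))) := tendsto_const_nhds.div (tendsto_const_nhds.add hQP) (by norm_num)
  rw [add_zero, div_one] at h
  refine h.congr' ?_
  filter_upwards [hP] with c hc
  rw [one_add_div hc.ne', one_div_div]

namespace ProbabilityTheory

theorem hasSubgaussianMGF_sub_gaussianReal (m : ℝ) (v : ℝ≥0) :
    HasSubgaussianMGF (fun x => x - m) v (gaussianReal m v) where
  integrable_exp_mul t := by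
    simpa [mul_sub, Real.exp_sub] using
      (integrable_exp_mul_gaussianReal (μ := m) (v := v) t).div_const (Real.exp (t * m))
  mgf_le t := by
    rw [mgf_gaussianReal (by rw [gaussianReal_map_sub_const, sub_self])]
    simp

theorem gaussianReal_real_Ioi_le (v : ℝ≥0) {m c : ℝ} (hc : m ≤ c) :
    (gaussianReal m v).real (Set.Ioi c) ≤ Real.exp (-(c - m) ^ 2 / (2 * v)) :=
  (measureReal_mono fun x (hx : c < x) => by simp only [Set.mem_ofPred_eq]; linarith).trans
    ((hasSubgaussianMGF_sub_gaussianReal m v).measure_ge_le (sub_nonneg.2 hc))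

theorem gaussianPDFReal_antitoneOn (m : ℝ) (v : ℝ≥0) :
    AntitoneOn (gaussianPDFReal m v) (Set.Ici m) := fun x (hx : m ≤ x) y (hy : m ≤ y) hxy => by
  simp only [gaussianPDFReal_def]
  gcongr

theorem mul_gaussianPDFReal_le_gaussianReal_real_Ioi {v : ℝ≥0} (hv : v ≠ 0) {m c ε : ℝ}
    (hc : m ≤ c) (hε : 0 ≤ ε) :
    ε * gaussianPDFReal m v (c + ε) ≤ (gaussianReal m v).real (Set.Ioi c) := by
  have hpdf : ∀ x ∈ Set.Ioc c (c + ε), gaussianPDFReal m v (c + ε) ≤ gaussianPDFReal m v x :=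
    fun x hx => gaussianPDFReal_antitoneOn m v (Set.mem_Ici.2 (hc.trans hx.1.le))
      (Set.mem_Ici.2 (by linarith)) hx.2
  calc ε * gaussianPDFReal m v (c + ε)
      = gaussianPDFReal m v (c + ε) * volume.real (Set.Ioc c (c + ε)) := by
        rw [Real.volume_real_Ioc_of_le (by linarith), add_sub_cancel_left, mul_comm]
    _ ≤ ∫ x in Set.Ioc c (c + ε), gaussianPDFReal m v x :=
        setIntegral_ge_of_const_le_real measurableSet_Ioc measure_Ioc_lt_top.ne hpdf
          (integrable_gaussianPDFReal m v).integrableOn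
    _ = (gaussianReal m v).real (Set.Ioc c (c + ε)) := by
        rw [measureReal_def, gaussianReal_apply_eq_integral m hv, ENNReal.toReal_ofReal
          (setIntegral_nonneg measurableSet_Ioc fun x _ => gaussianPDFReal_nonneg m v x)]
    _ ≤ (gaussianReal m v).real (Set.Ioi c) := measureReal_mono Set.Ioc_subset_Ioi_self

theorem gaussianReal_real_Ioi_pos {v : ℝ≥0} (hv : v ≠ 0) {m c : ℝ} (hc : m ≤ c) :
    0 < (gaussianReal m v).real (Set.Ioi c) := by
  have hlower := mul_gaussianPDFReal_le_gaussianReal_real_Ioi hv hc zero_le_one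
  rw [one_mul] at hlower
  exact (gaussianPDFReal_pos m v (c + 1) hv).trans_le hlower

end ProbabilityTheory

theorem tendsto_sub_div_atTop {σ : ℝ} (hσ : 0 < σ) (a : ℝ) :
    Tendsto (fun c : ℝ => (c - a) / σ) atTop atTop :=
  (tendsto_atTop_add_const_right atTop (-a) tendsto_id).atTop_div_const hσ

theorem tendsto_sq_div_sub_sq_div_atBot {m₁ m₂ σ₁ σ₂ ε : ℝ} (h₁ : 0 < σ₁) (h₂ : 0 < σ₂)
    (hlt : σ₂ < σ₁ ∨ (σ₂ = σ₁ ∧ ε < m₁ - m₂)) :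
    Tendsto (fun c => (c + ε - m₁) ^ 2 / (2 * σ₁ ^ 2) - (c - m₂) ^ 2 / (2 * σ₂ ^ 2))
      atTop atBot := by
  set a : ℝ → ℝ := fun c => (c - (m₁ - ε)) / σ₁
  set b : ℝ → ℝ := fun c => (c - m₂) / σ₂
  have hab : Tendsto (fun c => a c + b c) atTop atTop :=
    (tendsto_sub_div_atTop h₁ _).atTop_add_atTop (tendsto_sub_div_atTop h₂ _)
  have hprod : Tendsto (fun c => (a c - b c) * (a c + b c)) atTop atBot := by
    rcases hlt with hσ | ⟨rfl, hm⟩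
    · have hslope : σ₁⁻¹ - σ₂⁻¹ < 0 := sub_neg.2 (inv_strictAnti₀ h₂ hσ)
      refine Tendsto.atBot_mul_atTop₀ ?_ hab
      refine (tendsto_atBot_add_const_right atTop ((ε - m₁) / σ₁ + m₂ / σ₂)
        (tendsto_id.atTop_mul_const_of_neg hslope)).congr fun c => ?_
      simp only [id_eq, a, b]
      field_simp
      ring
    · have hgap : (ε - m₁ + m₂) / σ₂ < 0 := div_neg_of_neg_of_pos (by linarith) h₂
      refine (hab.const_mul_atTop_of_neg hgap).congr fun c => ?_
      congr 1
      simp only [a, b]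
      field_simp
      ring
  refine (hprod.atBot_div_const two_pos).congr fun c => ?_
  simp only [a, b]
  field_simp
  ring

theorem tendsto_gaussianReal_real_Ioi_div_zero {m₁ m₂ σ₁ σ₂ : ℝ} (h₁ : 0 < σ₁) (h₂ : 0 < σ₂)
    (hlt : σ₂ < σ₁ ∨ (σ₂ = σ₁ ∧ m₂ < m₁)) :
    Tendsto (fun c => (gaussianReal m₂ (σ₂ ^ 2).toNNReal).real (Set.Ioi c) /
      (gaussianReal m₁ (σ₁ ^ 2).toNNReal).real (Set.Ioi c)) atTop (𝓝 0) := by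
  -- the slab width `ε` must stay below `m₁ - m₂` when the variances agree
  obtain ⟨ε, hε, hlt'⟩ : ∃ ε : ℝ, 0 < ε ∧ (σ₂ < σ₁ ∨ (σ₂ = σ₁ ∧ ε < m₁ - m₂)) := by
    rcases hlt with hσ | ⟨hσ, hm⟩
    · exact ⟨1, one_pos, Or.inl hσ⟩
    · exact ⟨(m₁ - m₂) / 2, by linarith, Or.inr ⟨hσ, by linarith⟩⟩
  have hv₁ : (σ₁ ^ 2).toNNReal ≠ 0 := by simp [h₁.ne']
  set E : ℝ → ℝ := fun c => (c + ε - m₁) ^ 2 / (2 * σ₁ ^ 2) - (c - m₂) ^ 2 / (2 * σ₂ ^ 2)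
  set K := √(2 * π * σ₁ ^ 2) / ε
  have hbound : ∀ᶠ c in atTop, (gaussianReal m₂ (σ₂ ^ 2).toNNReal).real (Set.Ioi c) /
      (gaussianReal m₁ (σ₁ ^ 2).toNNReal).real (Set.Ioi c) ≤ K * exp (E c) := by
    filter_upwards [eventually_ge_atTop m₁, eventually_ge_atTop m₂] with c hc₁ hc₂
    have hupper := gaussianReal_real_Ioi_le (σ₂ ^ 2).toNNReal hc₂
    have hlower := mul_gaussianPDFReal_le_gaussianReal_real_Ioi hv₁ hc₁ hε.le
    have hpdf := gaussianPDFReal_pos m₁ _ (c + ε) hv₁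
    rw [Real.coe_toNNReal _ (sq_nonneg σ₂)] at hupper
    calc _ ≤ exp (-(c - m₂) ^ 2 / (2 * σ₂ ^ 2)) /
          (ε * gaussianPDFReal m₁ (σ₁ ^ 2).toNNReal (c + ε)) :=
          div_le_div₀ (exp_pos _).le hupper (by positivity) hlower
      _ = K * exp (E c) := by
          simp only [gaussianPDFReal_def, Real.coe_toNNReal _ (sq_nonneg σ₁), neg_div, exp_neg,
            exp_sub, E, K]
          field_simp
  have hlim : Tendsto (fun c => K * exp (E c)) atTop (𝓝 0) := by
    simpa using (tendsto_exp_atBot.comp (tendsto_sq_div_sub_sq_div_atBot h₁ h₂ hlt')).const_mul K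
  exact squeeze_zero' (.of_forall fun c => by positivity) hbound hlim

theorem gaussianReal_stronglyDominatesRight {m₁ m₂ σ₁ σ₂ : ℝ} (h₁ : 0 < σ₁) (h₂ : 0 < σ₂)
    (hlt : σ₂ < σ₁ ∨ (σ₂ = σ₁ ∧ m₂ < m₁)) :
    StronglyDominatesRight (gaussianReal m₁ (σ₁ ^ 2).toNNReal)
      (gaussianReal m₂ (σ₂ ^ 2).toNNReal) :=
  stronglyDominatesRight_of_tendsto_div_zero
    ((eventually_ge_atTop m₁).mono fun _ hc => gaussianReal_real_Ioi_pos (by simp [h₁.ne']) hc)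
    (tendsto_gaussianReal_real_Ioi_div_zero h₁ h₂ hlt)

theorem Finite.exists_forall_ne_lt {α β : Type*} [Finite α] [Nonempty α] [LinearOrder β]
    {f : α → β} (hf : Function.Injective f) : ∃ i, ∀ j, j ≠ i → f j < f i := by
  obtain ⟨i, hi⟩ := Finite.exists_max f
  exact ⟨i, fun j hj => (hi j).lt_of_ne (hf.ne hj)⟩

theorem exists_unique_strongly_dominant_normal
    (n : ℕ) (hn : 1 ≤ n) (m σ : Fin n → ℝ) (hσ : ∀ i, 0 < σ i)
    (hdiff : ∀ i j, i ≠ j → (m i, σ i) ≠ (m j, σ j))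
    (P : Fin n → Measure ℝ)
    (hP : ∀ i, P i = gaussianReal (m i) (Real.toNNReal ((σ i) ^ 2))) :
    ∃! iStar : Fin n, ∀ i, i ≠ iStar → StronglyDominatesRight (P iStar) (P i) := by
  have : Nonempty (Fin n) := ⟨⟨0, hn⟩⟩
  have hinj : Function.Injective fun i => toLex (σ i, m i) := fun i j hij => by
    by_contra hne
    obtain ⟨hσij, hmij⟩ := Prod.ext_iff.1 (toLex.injective hij)
    exact hdiff i j hne (Prod.ext hmij hσij)
  obtain ⟨iStar, hmax⟩ := Finite.exists_forall_ne_lt hinj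
  have hdom : ∀ i, i ≠ iStar → StronglyDominatesRight (P iStar) (P i) := fun i hi => by
    rw [hP, hP]
    exact gaussianReal_stronglyDominatesRight (hσ iStar) (hσ i) (Prod.Lex.lt_iff.1 (hmax i hi))
  refine ⟨iStar, hdom, fun j hj => ?_⟩
  by_contra hne
  exact (hdom j hne).asymm (hj iStar (Ne.symm hne))
end

section
/- Let n ≥ 1 and let P1, …, Pn be pairwise different normal distributions on ℝ, with Pi = N(mi, σi²) and (mi, σi) ≠ (mj, σj) for i ≠ j. Let i* ∈ {1, …, n} be an index such that σ_{i*} = max{σ1, …, σn} and m_{i*} = max{mj : σj = max{σ1, …, σn}}. Then P_{i*} strongly dominates P_i in the right tail for every i ≠ i*. -/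
open Real MeasureTheory Filter Topology ProbabilityTheory

open scoped NNReal

/-!
The density of `N(m₂, v₂)` is that of `N(m₁, v₁)` times `K · exp (A x² + B x)` with
`A = (1/v₁ - 1/v₂)/2` and `B = m₂/v₂ - m₁/v₁`. If `v₂ < v₁`, or `v₂ = v₁` and `m₂ < m₁`, this
quadratic is eventually decreasing and tends to `-∞`, so on `(c, ∞)` the second density is at most
`K · exp (A c² + B c)` times the first, and the ratio of the tails tends to `0`.
-/

theorem tendsto_div_self_add_of_tendsto_div_zero {α : Type*} {l : Filter α} {f g : α → ℝ}
    (hf : ∀ᶠ a in l, f a ≠ 0) (h : Tendsto (fun a => g a / f a) l (𝓝 0)) :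
    Tendsto (fun a => f a / (f a + g a)) l (𝓝 1) := by
  have h' : Tendsto (fun a => (1 + g a / f a)⁻¹) l (𝓝 1) := by
    simpa using (tendsto_const_nhds.add h).inv₀ (by norm_num : (1 : ℝ) + 0 ≠ 0)
  refine h'.congr' ?_
  filter_upwards [hf] with a ha
  rw [one_add_div ha, inv_div]

theorem tendsto_setIntegral_Ioi_div_of_le_mul {f g r : ℝ → ℝ} (hf : Integrable f)
    (hg : Integrable g) (hg_nonneg : ∀ x, 0 ≤ g x)
    (hf_pos : ∀ᶠ c in atTop, 0 < ∫ x in Set.Ioi c, f x) (hr : Tendsto r atTop (𝓝 0))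
    (hle : ∀ᶠ c in atTop, ∀ x, c < x → g x ≤ r c * f x) :
    Tendsto (fun c => (∫ x in Set.Ioi c, g x) / ∫ x in Set.Ioi c, f x) atTop (𝓝 0) := by
  refine tendsto_of_tendsto_of_tendsto_of_le_of_le' tendsto_const_nhds hr ?_ ?_
  · filter_upwards [hf_pos] with c hc
    exact div_nonneg (integral_nonneg fun x => hg_nonneg x) hc.le
  · filter_upwards [hf_pos, hle] with c hc hcle
    rw [div_le_iff₀ hc, ← integral_const_mul]
    exact setIntegral_mono_on hg.integrableOn (hf.const_mul _).integrableOn measurableSet_Ioi hcle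

section Quadratic

variable {A B : ℝ}

theorem tendsto_quadratic_atBot (h : A < 0 ∨ A = 0 ∧ B < 0) :
    Tendsto (fun x => A * x ^ 2 + B * x) atTop atBot := by
  rcases h with hA | ⟨rfl, hB⟩
  · have hlin : Tendsto (fun x => A * x + B) atTop atBot :=
      tendsto_atBot_add_const_right _ _ ((tendsto_const_mul_atBot_of_neg hA).mpr tendsto_id)
    exact (tendsto_id.atTop_mul_atBot₀ hlin).congr fun x => by simp only [id]; ring
  · simpa using (tendsto_const_mul_atBot_of_neg hB).mpr tendsto_id

theorem eventually_quadratic_le_of_le (h : A < 0 ∨ A = 0 ∧ B < 0) :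
    ∀ᶠ c in atTop, ∀ x, c ≤ x → A * x ^ 2 + B * x ≤ A * c ^ 2 + B * c := by
  have hA : A ≤ 0 := h.elim le_of_lt fun h => h.1.le
  have hslope : ∀ᶠ c in atTop, 2 * A * c + B ≤ 0 := by
    rcases h with hneg | ⟨rfl, hB⟩
    · have hlin : Tendsto (fun c => 2 * A * c + B) atTop atBot := tendsto_atBot_add_const_right _ _
        ((tendsto_const_mul_atBot_of_neg (by linarith)).mpr tendsto_id)
      exact hlin.eventually_le_atBot 0
    · exact Eventually.of_forall fun c => by linarith
  filter_upwards [hslope] with c hc x hcx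
  -- the difference factors as `(x - c) * (A * (x + c) + B)` and `A * (x + c) ≤ 2 * A * c`
  nlinarith [mul_nonneg (sub_nonneg.mpr hcx) (sub_nonneg.mpr hcx)]

end Quadratic

section Gaussian

variable {m₁ m₂ : ℝ} {v₁ v₂ : ℝ≥0}

theorem gaussianPDFReal_eq_mul_exp_quadratic_mul (hv₁ : v₁ ≠ 0) (hv₂ : v₂ ≠ 0) (x : ℝ) :
    gaussianPDFReal m₂ v₂ x = √(v₁ / v₂) * rexp (m₁ ^ 2 / (2 * v₁) - m₂ ^ 2 / (2 * v₂)) *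
      rexp (((v₁ : ℝ)⁻¹ - (v₂ : ℝ)⁻¹) / 2 * x ^ 2 + (m₂ / v₂ - m₁ / v₁) * x) *
      gaussianPDFReal m₁ v₁ x := by
  have h₁ : (0 : ℝ) < v₁ := by positivity
  have h₂ : (0 : ℝ) < v₂ := by positivity
  have hsqrt : √(v₁ / v₂) * (√(2 * π * v₁))⁻¹ = (√(2 * π * v₂))⁻¹ := by
    rw [sqrt_div' _ (by positivity), sqrt_mul' _ h₁.le, sqrt_mul' _ h₂.le]
    field_simp
  have hexp : rexp (-(x - m₂) ^ 2 / (2 * v₂)) = rexp (m₁ ^ 2 / (2 * v₁) - m₂ ^ 2 / (2 * v₂)) *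
      rexp (((v₁ : ℝ)⁻¹ - (v₂ : ℝ)⁻¹) / 2 * x ^ 2 + (m₂ / v₂ - m₁ / v₁) * x) *
      rexp (-(x - m₁) ^ 2 / (2 * v₁)) := by
    rw [← exp_add, ← exp_add]
    congr 1
    field_simp
    ring
  simp only [gaussianPDFReal]
  rw [← hsqrt, hexp]
  ring

theorem setIntegral_gaussianPDFReal_pos (μ : ℝ) {v : ℝ≥0} (hv : v ≠ 0) {s : Set ℝ}
    (hs : 0 < volume s) : 0 < ∫ x in s, gaussianPDFReal μ v x := by
  rw [setIntegral_pos_iff_support_of_nonneg_ae (ae_of_all _ (gaussianPDFReal_nonneg μ v))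
    (integrable_gaussianPDFReal μ v).integrableOn,
    Function.support_eq_univ fun x => (gaussianPDFReal_pos μ v x hv).ne', Set.univ_inter]
  exact hs

theorem toReal_gaussianReal_apply (μ : ℝ) {v : ℝ≥0} (hv : v ≠ 0) (s : Set ℝ) :
    (gaussianReal μ v s).toReal = ∫ x in s, gaussianPDFReal μ v x := by
  rw [gaussianReal_apply_eq_integral μ hv,
    ENNReal.toReal_ofReal (integral_nonneg fun x => gaussianPDFReal_nonneg μ v x)]

theorem stronglyDominatesRight_gaussianReal (hv₂ : v₂ ≠ 0) (h : v₂ < v₁ ∨ v₂ = v₁ ∧ m₂ < m₁) :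
    StronglyDominatesRight (gaussianReal m₁ v₁) (gaussianReal m₂ v₂) := by
  have hv₁ : v₁ ≠ 0 := by
    rcases h with h | ⟨rfl, -⟩
    exacts [(pos_of_gt h).ne', hv₂]
  set A : ℝ := ((v₁ : ℝ)⁻¹ - (v₂ : ℝ)⁻¹) / 2
  set B : ℝ := m₂ / v₂ - m₁ / v₁
  set K : ℝ := √(v₁ / v₂) * rexp (m₁ ^ 2 / (2 * v₁) - m₂ ^ 2 / (2 * v₂))
  have hAB : A < 0 ∨ A = 0 ∧ B < 0 := by
    simp only [A, B]
    rcases h with h | ⟨rfl, hm⟩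
    · left
      have : (v₁ : ℝ)⁻¹ < (v₂ : ℝ)⁻¹ := inv_strictAnti₀ (by positivity) (mod_cast h)
      linarith
    · right
      refine ⟨by simp, ?_⟩
      rw [← sub_div]
      exact div_neg_of_neg_of_pos (by linarith) (by positivity)
  have htail_pos : ∀ c, 0 < ∫ x in Set.Ioi c, gaussianPDFReal m₁ v₁ x :=
    fun c => setIntegral_gaussianPDFReal_pos _ hv₁ (by simp)
  unfold StronglyDominatesRight
  simp only [toReal_gaussianReal_apply _ hv₁, toReal_gaussianReal_apply _ hv₂]
  refine tendsto_div_self_add_of_tendsto_div_zero (Eventually.of_forall fun c => (htail_pos c).ne')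
    (tendsto_setIntegral_Ioi_div_of_le_mul (r := fun c => K * rexp (A * c ^ 2 + B * c))
      (integrable_gaussianPDFReal _ _) (integrable_gaussianPDFReal _ _)
      (gaussianPDFReal_nonneg _ _) (Eventually.of_forall htail_pos) ?_ ?_)
  · simpa using (tendsto_exp_atBot.comp (tendsto_quadratic_atBot hAB)).const_mul K
  · filter_upwards [eventually_quadratic_le_of_le hAB] with c hc x hcx
    rw [gaussianPDFReal_eq_mul_exp_quadratic_mul hv₁ hv₂]
    have hK : 0 ≤ K := by positivity
    exact mul_le_mul_of_nonneg_right (mul_le_mul_of_nonneg_left (exp_le_exp.mpr (hc x hcx.le)) hK)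
      (gaussianPDFReal_nonneg _ _ _)

end Gaussian

theorem argmax_sd_then_mean_strongly_dominates_general
    (n : ℕ) (m σ : Fin n → ℝ) (hσ : ∀ i, 0 < σ i)
    (hdiff : ∀ i j, i ≠ j → (m i, σ i) ≠ (m j, σ j))
    (P : Fin n → Measure ℝ)
    (hP : ∀ i, P i = gaussianReal (m i) (Real.toNNReal ((σ i) ^ 2)))
    (iStar : Fin n)
    (hσmax : ∀ i, σ i ≤ σ iStar)
    (hmmax : ∀ i, σ i = σ iStar → m i ≤ m iStar) :
    ∀ i, i ≠ iStar → StronglyDominatesRight (P iStar) (P i) := by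
  intro i hi
  rw [hP, hP]
  refine stronglyDominatesRight_gaussianReal (by simpa using (hσ i).ne') ?_
  rcases (hσmax i).lt_or_eq with hlt | heq
  · left
    exact Real.toNNReal_lt_toNNReal_iff (pow_pos (hσ iStar) 2) |>.mpr
      (pow_lt_pow_left₀ hlt (hσ i).le two_ne_zero)
  · right
    refine ⟨by rw [heq], (hmmax i heq).lt_of_ne fun hm => hdiff i iStar hi ?_⟩
    rw [hm, heq]

theorem argmax_sd_then_mean_strongly_dominates
    (n : ℕ) (hn : 1 ≤ n) (m σ : Fin n → ℝ) (hσ : ∀ i, 0 < σ i)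
    (hdiff : ∀ i j, i ≠ j → (m i, σ i) ≠ (m j, σ j))
    (P : Fin n → Measure ℝ)
    (hP : ∀ i, P i = gaussianReal (m i) (Real.toNNReal ((σ i) ^ 2)))
    (iStar : Fin n)
    (hσmax : ∀ i, σ i ≤ σ iStar)
    (hmmax : ∀ i, σ i = σ iStar → m i ≤ m iStar) :
    ∀ i, i ≠ iStar → StronglyDominatesRight (P iStar) (P i) :=
  argmax_sd_then_mean_strongly_dominates_general n m σ hσ hdiff P hP iStar hσmax hmmax
end

section
/- Let n ≥ 1 and let P1, …, Pn be pairwise different normal distributions on ℝ, with Pi = N(mi, σi²) and (mi, σi) ≠ (mj, σj) for i ≠ j, and let F̄_i(c) = P_i((c,∞)). Then there exists a unique index i* ∈ {1, …, n} such that for ALL choices of strictly positive weights S1, …, Sn > 0, lim_{c→∞} (S_{i*}·F̄_{i*}(c)) / (Σ_{i=1}^n S_i·F̄_i(c)) = 1. -/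
open Real MeasureTheory Filter Topology ProbabilityTheory

/-!
The winner is the Gaussian with the largest standard deviation, ties broken by the largest
mean. Against any other Gaussian the logarithm of the density ratio is a quadratic in `x` tending
to `+∞`, so its density eventually dominates the other one by any constant factor; integrating
over `(c, ∞)` transfers this to the tails, whence every other tail is negligible against its tail.
It is the only such index: the shares of two distinct subpopulations add up to at most `1`, not `2`.
-/

open Set Asymptotics Finset
open scoped NNReal

theorem tendsto_setIntegral_Ioi_div_of_isLittleO {f g : ℝ → ℝ} (hf : 0 ≤ f) (hg : 0 ≤ g)
    (hf_int : Integrable f) (hg_int : Integrable g) (hfg : f =o[atTop] g) :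
    Tendsto (fun c => (∫ x in Ioi c, f x) / ∫ x in Ioi c, g x) atTop (𝓝 0) := by
  have hg_tail (c : ℝ) : 0 ≤ ∫ x in Ioi c, g x :=
    setIntegral_nonneg measurableSet_Ioi fun x _ => hg x
  have hle (ε : ℝ) (hε : 0 < ε) :
      ∀ᶠ c in atTop, (∫ x in Ioi c, f x) / ∫ x in Ioi c, g x ≤ ε := by
    obtain ⟨c₀, hc₀⟩ := eventually_atTop.1 (hfg.bound hε)
    filter_upwards [eventually_ge_atTop c₀] with c hc
    refine div_le_of_le_mul₀ (hg_tail c) hε.le ?_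
    rw [← integral_const_mul]
    refine setIntegral_mono_on hf_int.integrableOn (hg_int.const_mul ε).integrableOn
      measurableSet_Ioi fun x hx => ?_
    simpa [abs_of_nonneg (hf x), abs_of_nonneg (hg x)] using hc₀ x (hc.trans (le_of_lt hx))
  refine tendsto_order.2 ⟨fun a ha => Eventually.of_forall fun c => ha.trans_le ?_, fun a ha => ?_⟩
  · exact div_nonneg (setIntegral_nonneg measurableSet_Ioi fun x _ => hf x) (hg_tail c)
  · filter_upwards [hle (a / 2) (half_pos ha)] with c hc using hc.trans_lt (half_lt_self ha)

theorem tendsto_quadratic_atTop {a b c : ℝ} (h : 0 < a ∨ a = 0 ∧ 0 < b) :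
    Tendsto (fun x => a * x ^ 2 + b * x + c) atTop atTop := by
  refine tendsto_atTop_add_const_right _ c ?_
  rcases h with ha | ⟨rfl, hb⟩
  · refine (tendsto_id.atTop_mul_atTop₀
      (tendsto_atTop_add_const_right _ b (tendsto_id.const_mul_atTop ha))).congr fun x => ?_
    simp only [id]
    ring
  · simpa using tendsto_id.const_mul_atTop hb

theorem gaussianPDFReal_isLittleO {μ₁ μ₂ : ℝ} {v₁ v₂ : ℝ≥0} (hv₁ : v₁ ≠ 0) (hv₂ : v₂ ≠ 0)
    (h : v₂ < v₁ ∨ v₂ = v₁ ∧ μ₂ < μ₁) :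
    gaussianPDFReal μ₂ v₂ =o[atTop] gaussianPDFReal μ₁ v₁ := by
  have hv₁' : (0 : ℝ) < v₁ := by positivity
  have hv₂' : (0 : ℝ) < v₂ := by positivity
  have hexp : (fun x => rexp (-(x - μ₂) ^ 2 / (2 * v₂))) =o[atTop]
      fun x => rexp (-(x - μ₁) ^ 2 / (2 * v₁)) := by
    rw [isLittleO_exp_comp_exp_comp]
    -- the coefficients of `(x - μ₂)² / (2 v₂) - (x - μ₁)² / (2 v₁)`
    refine (tendsto_quadratic_atTop (a := 1 / (2 * v₂) - 1 / (2 * v₁))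
      (b := μ₁ / v₁ - μ₂ / v₂) (c := μ₂ ^ 2 / (2 * v₂) - μ₁ ^ 2 / (2 * v₁)) ?_).congr fun x => ?_
    · rcases h with h | ⟨rfl, h⟩
      · left
        have : (2 * v₂ : ℝ) < 2 * v₁ := by gcongr
        linarith [one_div_lt_one_div_of_lt (by positivity) this]
      · right
        refine ⟨sub_self _, ?_⟩
        linarith [div_lt_div_of_pos_right h hv₂']
    · field_simp
      ring
  exact (hexp.const_mul_left _).const_mul_right (by positivity)

theorem gaussianReal_Ioi_toReal_eq_integral (μ : ℝ) {v : ℝ≥0} (hv : v ≠ 0) (c : ℝ) :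
    (gaussianReal μ v (Ioi c)).toReal = ∫ x in Ioi c, gaussianPDFReal μ v x := by
  rw [gaussianReal_apply_eq_integral μ hv, ENNReal.toReal_ofReal
    (setIntegral_nonneg measurableSet_Ioi fun x _ => gaussianPDFReal_nonneg μ v x)]

theorem gaussianReal_Ioi_toReal_pos (μ : ℝ) {v : ℝ≥0} (hv : v ≠ 0) (c : ℝ) :
    0 < (gaussianReal μ v (Ioi c)).toReal :=
  ENNReal.toReal_pos (fun h => by simpa using gaussianReal_absolutelyContinuous' μ hv h)
    (measure_ne_top _ _)

theorem tendsto_gaussianReal_Ioi_div {μ₁ μ₂ : ℝ} {v₁ v₂ : ℝ≥0} (hv₁ : v₁ ≠ 0) (hv₂ : v₂ ≠ 0)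
    (h : v₂ < v₁ ∨ v₂ = v₁ ∧ μ₂ < μ₁) :
    Tendsto (fun c => (gaussianReal μ₂ v₂ (Ioi c)).toReal / (gaussianReal μ₁ v₁ (Ioi c)).toReal)
      atTop (𝓝 0) := by
  simp only [gaussianReal_Ioi_toReal_eq_integral _ hv₁, gaussianReal_Ioi_toReal_eq_integral _ hv₂]
  exact tendsto_setIntegral_Ioi_div_of_isLittleO (gaussianPDFReal_nonneg _ _)
    (gaussianPDFReal_nonneg _ _) (integrable_gaussianPDFReal _ _) (integrable_gaussianPDFReal _ _)
    (gaussianPDFReal_isLittleO hv₁ hv₂ h)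

section Overrepresentation

variable {ι : Type*} [Fintype ι]

def IsStronglyOverrepresented (F : ι → ℝ → ℝ) (i : ι) : Prop :=
  ∀ S : ι → ℝ, (∀ j, 0 < S j) → Tendsto (fun c => S i * F i c / ∑ j, S j * F j c) atTop (𝓝 1)

theorem isStronglyOverrepresented_of_tendsto_div [DecidableEq ι] {F : ι → ℝ → ℝ} {i : ι}
    (hpos : ∀ᶠ c in atTop, F i c ≠ 0)
    (hdom : ∀ j ≠ i, Tendsto (fun c => F j c / F i c) atTop (𝓝 0)) :
    IsStronglyOverrepresented F i := by
  intro S hS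
  have hrest :
      Tendsto (fun c => ∑ j ∈ univ.erase i, S j / S i * (F j c / F i c)) atTop (𝓝 0) := by
    simpa only [mul_zero, sum_const_zero] using
      tendsto_finsetSum _ fun j hj => (hdom j (ne_of_mem_erase hj)).const_mul (S j / S i)
  have hlim := (tendsto_const_nhds (x := (1 : ℝ))).add hrest |>.inv₀ (by norm_num)
  rw [add_zero, inv_one] at hlim
  refine hlim.congr' ?_
  filter_upwards [hpos] with c hc
  have hi : S i * F i c ≠ 0 := mul_ne_zero (hS i).ne' hc
  have hsum : 1 + ∑ j ∈ univ.erase i, S j / S i * (F j c / F i c)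
      = (S i * F i c + ∑ j ∈ univ.erase i, S j * F j c) / (S i * F i c) := by
    rw [add_div, div_self hi, Finset.sum_div]
    congr 1
    refine sum_congr rfl fun j _ => ?_
    field_simp
  rw [← Finset.add_sum_erase _ _ (mem_univ i), hsum, inv_div]

theorem IsStronglyOverrepresented.unique {F : ι → ℝ → ℝ} (hF : ∀ j c, 0 ≤ F j c) {i i' : ι}
    (hi : IsStronglyOverrepresented F i) (hi' : IsStronglyOverrepresented F i') : i = i' := by
  classical
  by_contra hne
  have hshares (c : ℝ) : F i c / ∑ j, F j c + F i' c / ∑ j, F j c ≤ 1 := by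
    rw [← add_div, ← Finset.sum_pair (f := (F · c)) hne]
    exact div_le_one_of_le₀ (sum_le_sum_of_subset_of_nonneg (subset_univ _) fun j _ _ => hF j c)
      (sum_nonneg fun j _ => hF j c)
  have h2 := (hi _ fun _ => one_pos).add (hi' _ fun _ => one_pos)
  simp only [one_mul] at h2
  have := le_of_tendsto h2 (.of_forall hshares)
  norm_num at this

end Overrepresentation

theorem exists_unique_strongly_overrepresented_normal
    (n : ℕ) (hn : 1 ≤ n) (m σ : Fin n → ℝ) (hσ : ∀ i, 0 < σ i)
    (hdiff : ∀ i j, i ≠ j → (m i, σ i) ≠ (m j, σ j))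
    (P : Fin n → Measure ℝ)
    (hP : ∀ i, P i = gaussianReal (m i) (Real.toNNReal ((σ i) ^ 2))) :
    ∃! iStar : Fin n, ∀ S : Fin n → ℝ, (∀ i, 0 < S i) →
      Tendsto (fun c => (S iStar * (P iStar (Set.Ioi c)).toReal) /
        (∑ i, S i * (P i (Set.Ioi c)).toReal)) atTop (𝓝 1) := by
  obtain rfl : P = fun i => gaussianReal (m i) (σ i ^ 2).toNNReal := funext hP
  have : Nonempty (Fin n) := Fin.pos_iff_nonempty.mp hn
  have hv (i : Fin n) : (σ i ^ 2).toNNReal ≠ 0 := by simpa using (hσ i).ne'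
  obtain ⟨iStar, -, hmax⟩ := exists_max_image univ (fun i => toLex (σ i, m i)) univ_nonempty
  have hdom (j : Fin n) (hj : j ≠ iStar) : (σ j ^ 2).toNNReal < (σ iStar ^ 2).toNNReal ∨
      (σ j ^ 2).toNNReal = (σ iStar ^ 2).toNNReal ∧ m j < m iStar := by
    have hlt : toLex (σ j, m j) < toLex (σ iStar, m iStar) :=
      (hmax j (mem_univ j)).lt_of_ne fun h =>
        let ⟨hσj, hmj⟩ := Prod.ext_iff.1 (toLex_inj.1 h)
        hdiff j iStar hj (Prod.ext hmj hσj)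
    rcases Prod.Lex.lt_iff.1 hlt with h | ⟨h, h'⟩
    · exact .inl ((toNNReal_lt_toNNReal_iff (pow_pos (hσ iStar) 2)).2
        (pow_lt_pow_left₀ h (hσ j).le two_ne_zero))
    · exact .inr ⟨congrArg (fun s => (s ^ 2).toNNReal) h, h'⟩
  have hstar : IsStronglyOverrepresented
      (fun i c => (gaussianReal (m i) (σ i ^ 2).toNNReal (Ioi c)).toReal) iStar :=
    isStronglyOverrepresented_of_tendsto_div
      (.of_forall fun c => (gaussianReal_Ioi_toReal_pos _ (hv iStar) c).ne')
      fun j hj => tendsto_gaussianReal_Ioi_div (hv iStar) (hv j) (hdom j hj)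
  exact ⟨iStar, hstar, fun j hj => (hstar.unique (fun _ _ => ENNReal.toReal_nonneg) hj).symm⟩
end

section
/- Let f1(x) = 1/(π(1 + x²)) and f2(x) = 1/(π(1 + 2x² − 2x)) be the Cauchy densities with medians 0 and 0.5 and scale parameters 1 and 0.5 respectively, and let F̄_i(c) = ∫_c^∞ f_i(x) dx. Then lim_{x→∞} f1(x)/f2(x) = 2 and lim_{c→∞} F̄1(c)/F̄2(c) = 2; in particular, lim_{c→∞} F̄1(c)/(F̄1(c) + F̄2(c)) = 2/3 ≠ 1, so neither distribution strongly dominates the other in the right tail. -/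
open Real MeasureTheory Filter Topology Set ProbabilityTheory
open scoped NNReal

/-!
A Cauchy tail is explicit, `1/2 - arctan ((c - x₀) / γ) / π`, and vanishes at infinity, so by
L'Hôpital's rule the ratio of two tails has the same limit as the ratio of the densities, which is
`γ₁ / γ₂` because every Cauchy density decays like `γ / (π x²)`. Here `γ₁ / γ₂ = 1 / (1/2) = 2`,
and the share `F̄₁ / (F̄₁ + F̄₂) = (F̄₁/F̄₂) / (1 + F̄₁/F̄₂)` tends to `2 / 3`.
-/

lemma tendsto_sq_sub_add_div_sq_sub_add_atTop (a b c d : ℝ) :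
    Tendsto (fun x => ((x - a) ^ 2 + b) / ((x - c) ^ 2 + d)) atTop (𝓝 1) := by
  have hcont : ContinuousAt
      (fun u : ℝ => ((1 - a * u) ^ 2 + b * u ^ 2) / ((1 - c * u) ^ 2 + d * u ^ 2)) 0 :=
    .div (by fun_prop) (by fun_prop) (by norm_num)
  have hlim := hcont.tendsto.comp tendsto_inv_atTop_zero
  norm_num at hlim
  refine hlim.congr' ?_
  filter_upwards [eventually_gt_atTop 0] with x hx
  simp only [Function.comp_apply]
  field_simp

lemma cauchyPDFReal_div_cauchyPDFReal (x₁ x₂ : ℝ) (γ₁ : ℝ≥0) {γ₂ : ℝ≥0} (h₂ : γ₂ ≠ 0) (x : ℝ) :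
    cauchyPDFReal x₁ γ₁ x / cauchyPDFReal x₂ γ₂ x
      = γ₁ / γ₂ * (((x - x₂) ^ 2 + γ₂ ^ 2) / ((x - x₁) ^ 2 + γ₁ ^ 2)) := by
  have : (γ₂ : ℝ) ≠ 0 := by exact_mod_cast h₂
  have : (x - x₂) ^ 2 + (γ₂ : ℝ) ^ 2 ≠ 0 := by positivity
  simp only [cauchyPDFReal_def]
  field_simp

lemma tendsto_cauchyPDFReal_div_cauchyPDFReal_atTop (x₁ x₂ : ℝ) (γ₁ : ℝ≥0) {γ₂ : ℝ≥0}
    (h₂ : γ₂ ≠ 0) :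
    Tendsto (fun x => cauchyPDFReal x₁ γ₁ x / cauchyPDFReal x₂ γ₂ x) atTop (𝓝 (γ₁ / γ₂)) := by
  simp_rw [cauchyPDFReal_div_cauchyPDFReal x₁ x₂ γ₁ h₂]
  simpa using (tendsto_sq_sub_add_div_sq_sub_add_atTop _ _ _ _).const_mul ((γ₁ : ℝ) / γ₂)

lemma hasDerivAt_arctan_div_pi (x₀ : ℝ) {γ : ℝ≥0} (hγ : γ ≠ 0) (x : ℝ) :
    HasDerivAt (fun y => arctan ((y - x₀) / γ) / π) (cauchyPDFReal x₀ γ x) x := by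
  have hγ' : (γ : ℝ) ≠ 0 := by exact_mod_cast hγ
  refine ((((hasDerivAt_id x).sub_const x₀).div_const (γ : ℝ)).arctan.div_const π).congr_deriv ?_
  rw [cauchyPDFReal_def, id]
  field_simp
  ring

lemma tendsto_arctan_div_pi_atTop (x₀ : ℝ) {γ : ℝ≥0} (hγ : γ ≠ 0) :
    Tendsto (fun y => arctan ((y - x₀) / γ) / π) atTop (𝓝 (1 / 2)) := by
  have hγ' : (0 : ℝ) < γ := by positivity
  have h := ((tendsto_nhds_of_tendsto_nhdsWithin tendsto_arctan_atTop).comp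
    ((tendsto_atTop_add_const_right _ (-x₀) tendsto_id).atTop_div_const hγ')).div_const π
  convert h using 2
  · simp [sub_eq_add_neg]
  · field_simp

lemma integral_Ioi_cauchyPDFReal (x₀ : ℝ) {γ : ℝ≥0} (hγ : γ ≠ 0) (c : ℝ) :
    ∫ x in Ioi c, cauchyPDFReal x₀ γ x = 1 / 2 - arctan ((c - x₀) / γ) / π :=
  integral_Ioi_of_hasDerivAt_of_nonneg' (fun x _ => hasDerivAt_arctan_div_pi x₀ hγ x)
    (fun x _ => (cauchyPDF_pos x₀ hγ x).le) (tendsto_arctan_div_pi_atTop x₀ hγ)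

lemma integral_Ioi_cauchyPDFReal_pos (x₀ : ℝ) {γ : ℝ≥0} (hγ : γ ≠ 0) (c : ℝ) :
    0 < ∫ x in Ioi c, cauchyPDFReal x₀ γ x := by
  rw [integral_Ioi_cauchyPDFReal x₀ hγ, sub_pos, div_lt_iff₀ pi_pos]
  linarith [arctan_lt_pi_div_two ((c - x₀) / γ)]

lemma tendsto_integral_Ioi_cauchyPDFReal_atTop (x₀ : ℝ) {γ : ℝ≥0} (hγ : γ ≠ 0) :
    Tendsto (fun c => ∫ x in Ioi c, cauchyPDFReal x₀ γ x) atTop (𝓝 0) := by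
  simp_rw [integral_Ioi_cauchyPDFReal x₀ hγ]
  simpa using (tendsto_arctan_div_pi_atTop x₀ hγ).const_sub (1 / 2 : ℝ)

lemma hasDerivAt_integral_Ioi_cauchyPDFReal (x₀ : ℝ) {γ : ℝ≥0} (hγ : γ ≠ 0) (c : ℝ) :
    HasDerivAt (fun c => ∫ x in Ioi c, cauchyPDFReal x₀ γ x) (-cauchyPDFReal x₀ γ c) c := by
  simp_rw [integral_Ioi_cauchyPDFReal x₀ hγ]
  simpa using (hasDerivAt_arctan_div_pi x₀ hγ c).const_sub (1 / 2 : ℝ)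

theorem tendsto_integral_Ioi_cauchyPDFReal_div_atTop (x₁ x₂ : ℝ) {γ₁ γ₂ : ℝ≥0} (h₁ : γ₁ ≠ 0)
    (h₂ : γ₂ ≠ 0) :
    Tendsto (fun c => (∫ x in Ioi c, cauchyPDFReal x₁ γ₁ x) / ∫ x in Ioi c, cauchyPDFReal x₂ γ₂ x)
      atTop (𝓝 (γ₁ / γ₂)) :=
  HasDerivAt.lhopital_zero_atTop
    (.of_forall (hasDerivAt_integral_Ioi_cauchyPDFReal x₁ h₁))
    (.of_forall (hasDerivAt_integral_Ioi_cauchyPDFReal x₂ h₂))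
    (.of_forall fun c => neg_ne_zero.mpr (cauchyPDF_pos x₂ h₂ c).ne')
    (tendsto_integral_Ioi_cauchyPDFReal_atTop x₁ h₁)
    (tendsto_integral_Ioi_cauchyPDFReal_atTop x₂ h₂)
    (by simpa only [neg_div_neg_eq] using tendsto_cauchyPDFReal_div_cauchyPDFReal_atTop x₁ x₂ γ₁ h₂)

section

variable {α : Type*} {l : Filter α} {F G : α → ℝ} {L : ℝ}

lemma tendsto_left_div_add_of_tendsto_div (hG : ∀ᶠ a in l, G a ≠ 0)
    (h : Tendsto (fun a => F a / G a) l (𝓝 L)) (hL : 1 + L ≠ 0) :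
    Tendsto (fun a => F a / (F a + G a)) l (𝓝 (L / (1 + L))) := by
  refine (h.div (tendsto_const_nhds.add h) hL).congr' ?_
  filter_upwards [hG] with a ha
  show F a / G a / (1 + F a / G a) = _
  rw [one_add_div ha, div_div_div_cancel_right₀ ha, add_comm]

lemma tendsto_right_div_add_of_tendsto_div (hG : ∀ᶠ a in l, G a ≠ 0)
    (h : Tendsto (fun a => F a / G a) l (𝓝 L)) (hL : 1 + L ≠ 0) :
    Tendsto (fun a => G a / (F a + G a)) l (𝓝 (1 / (1 + L))) := by
  refine (tendsto_const_nhds.div (tendsto_const_nhds.add h) hL).congr' ?_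
  filter_upwards [hG] with a ha
  show 1 / (1 + F a / G a) = _
  rw [one_add_div ha, one_div_div, add_comm]

end

lemma cauchyPDFReal_zero_one (x : ℝ) : cauchyPDFReal 0 1 x = 1 / (π * (1 + x ^ 2)) := by
  rw [cauchyPDFReal_def]
  norm_num
  ring

lemma cauchyPDFReal_half_half (x : ℝ) :
    cauchyPDFReal (1 / 2) (1 / 2) x = 1 / (π * (1 + 2 * x ^ 2 - 2 * x)) := by
  have : 1 + 2 * x ^ 2 - 2 * x ≠ 0 := by nlinarith [sq_nonneg (2 * x - 1)]
  rw [cauchyPDFReal_def]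
  norm_num
  field_simp
  ring

theorem cauchy_right_tail_ratio_two
    (f1 f2 : ℝ → ℝ)
    (hf1 : ∀ x, f1 x = 1 / (π * (1 + x ^ 2)))
    (hf2 : ∀ x, f2 x = 1 / (π * (1 + 2 * x ^ 2 - 2 * x)))
    (F1 F2 : ℝ → ℝ)
    (hF1 : ∀ c, F1 c = ∫ x in Set.Ioi c, f1 x)
    (hF2 : ∀ c, F2 c = ∫ x in Set.Ioi c, f2 x) :
    Tendsto (fun x => f1 x / f2 x) atTop (𝓝 2)
    ∧ Tendsto (fun c => F1 c / F2 c) atTop (𝓝 2)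
    ∧ Tendsto (fun c => F1 c / (F1 c + F2 c)) atTop (𝓝 (2 / 3))
    ∧ ¬ Tendsto (fun c => F1 c / (F1 c + F2 c)) atTop (𝓝 1)
    ∧ ¬ Tendsto (fun c => F2 c / (F1 c + F2 c)) atTop (𝓝 1) := by
  obtain rfl : f1 = cauchyPDFReal 0 1 :=
    funext fun x => (hf1 x).trans (cauchyPDFReal_zero_one x).symm
  obtain rfl : f2 = cauchyPDFReal (1 / 2) (1 / 2) :=
    funext fun x => (hf2 x).trans (cauchyPDFReal_half_half x).symm
  obtain rfl : F1 = fun c => ∫ x in Ioi c, cauchyPDFReal 0 1 x := funext hF1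
  obtain rfl : F2 = fun c => ∫ x in Ioi c, cauchyPDFReal (1 / 2) (1 / 2) x := funext hF2
  have hγ : (1 / 2 : ℝ≥0) ≠ 0 := by norm_num
  have hratio : ((1 : ℝ≥0) : ℝ) / ((1 / 2 : ℝ≥0) : ℝ) = 2 := by norm_num
  have htail := tendsto_integral_Ioi_cauchyPDFReal_div_atTop 0 (1 / 2) one_ne_zero hγ
  have hdens := tendsto_cauchyPDFReal_div_cauchyPDFReal_atTop 0 (1 / 2) 1 hγ
  rw [hratio] at htail hdens
  have hF2ne : ∀ᶠ c in atTop, ∫ x in Ioi c, cauchyPDFReal (1 / 2) (1 / 2) x ≠ 0 :=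
    .of_forall fun c => (integral_Ioi_cauchyPDFReal_pos (1 / 2) hγ c).ne'
  have hF1share := tendsto_left_div_add_of_tendsto_div hF2ne htail (by norm_num)
  have hF2share := tendsto_right_div_add_of_tendsto_div hF2ne htail (by norm_num)
  rw [show (2 : ℝ) / (1 + 2) = 2 / 3 by norm_num] at hF1share
  exact ⟨hdens, htail, hF1share, fun h => absurd (tendsto_nhds_unique hF1share h) (by norm_num),
    fun h => absurd (tendsto_nhds_unique hF2share h) (by norm_num)⟩
end
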